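/- arXiv:1112.0957 — 2 statements merged into one kernel-verified Lean document; each statement's English description precedes it below -/
import Mathlib

section
/- Let f : J → ℝ be bounded on compact subintervals of an interval J. Then f is Riemann (Darboux) integrable on every compact subinterval of J if and only if any two pre-primitives of f on J differ by a constant. -/
open Set Filter Topology

noncomputable section

/-- The set of lower Darboux sums of `f` over `[a,b]`: sums `∑ pᵢ (xᵢ₊₁ - xᵢ)` over
partitions `a = x₀ ≤ x₁ ≤ … ≤ xₙ = b` where each `pᵢ` is a lower bound of `f` on
`[xᵢ, xᵢ₊₁]`. -/
def lowerSums (f : ℝ → ℝ) (a b : ℝ) : Set ℝ :=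
  {s | ∃ n : ℕ, ∃ x : ℕ → ℝ, ∃ p : ℕ → ℝ,
    x 0 = a ∧ x n = b ∧ (∀ i < n, x i ≤ x (i + 1)) ∧
    (∀ i < n, ∀ t ∈ Set.Icc (x i) (x (i + 1)), p i ≤ f t) ∧
    s = ∑ i ∈ Finset.range n, p i * (x (i + 1) - x i)}

/-- The set of upper Darboux sums of `f` over `[a,b]`. -/
def upperSums (f : ℝ → ℝ) (a b : ℝ) : Set ℝ :=
  {s | ∃ n : ℕ, ∃ x : ℕ → ℝ, ∃ q : ℕ → ℝ,
    x 0 = a ∧ x n = b ∧ (∀ i < n, x i ≤ x (i + 1)) ∧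
    (∀ i < n, ∀ t ∈ Set.Icc (x i) (x (i + 1)), f t ≤ q i) ∧
    s = ∑ i ∈ Finset.range n, q i * (x (i + 1) - x i)}

/-- The lower Darboux integral of `f` over `[a,b]`. -/
def lowerDarboux (f : ℝ → ℝ) (a b : ℝ) : ℝ := sSup (lowerSums f a b)

/-- The upper Darboux integral of `f` over `[a,b]`. -/
def upperDarboux (f : ℝ → ℝ) (a b : ℝ) : ℝ := sInf (upperSums f a b)

/-- `f` is bounded on every compact subinterval of `J`. -/
def BoundedOnCompacts (J : Set ℝ) (f : ℝ → ℝ) : Prop :=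
  ∀ a ∈ J, ∀ b ∈ J, ∃ p q : ℝ, ∀ t ∈ Set.Icc a b, p ≤ f t ∧ f t ≤ q

/-- `F` is a pre-primitive of `f` on `J`: every difference quotient lies between
every lower bound and every upper bound of `f` on the interval with the given
endpoints. -/
def PrePrimitive (J : Set ℝ) (f F : ℝ → ℝ) : Prop :=
  ∀ x ∈ J, ∀ y ∈ J, x ≠ y → ∀ p q : ℝ,
    (∀ t ∈ Set.uIcc x y, p ≤ f t ∧ f t ≤ q) →
    p ≤ (F y - F x) / (y - x) ∧ (F y - F x) / (y - x) ≤ q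

/-- `f` is Darboux (Riemann) integrable on every compact subinterval of `J`. -/
def DarbouxIntegrableOnCompacts (J : Set ℝ) (f : ℝ → ℝ) : Prop :=
  ∀ a ∈ J, ∀ b ∈ J, a < b → lowerDarboux f a b = upperDarboux f a b

lemma part_mono {x : ℕ → ℝ} {n : ℕ} (h : ∀ i < n, x i ≤ x (i+1)) :
    ∀ i j, i ≤ j → j ≤ n → x i ≤ x j := by
  intro i j hij hjn
  induction j with
  | zero => exact le_of_eq (congrArg x (Nat.le_zero.mp hij))
  | succ k ih =>
    rcases Nat.eq_or_lt_of_le hij with rfl | h'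
    · exact le_rfl
    · exact (ih (Nat.lt_succ_iff.mp h') (by omega)).trans (h k (by omega))

lemma lowerSums_nonempty {f : ℝ → ℝ} {a b p : ℝ} (hab : a ≤ b)
    (hp : ∀ t ∈ Icc a b, p ≤ f t) : p * (b - a) ∈ lowerSums f a b := by
  refine ⟨1, fun i => if i = 0 then a else b, fun _ => p, by simp, by simp, ?_, ?_, by simp⟩
  · intro i hi
    interval_cases i
    simp [hab]
  · intro i hi t ht
    interval_cases i
    simp only [if_pos rfl, if_neg one_ne_zero] at ht
    exact hp t ht

lemma lowerSums_le {f : ℝ → ℝ} {a b q s : ℝ}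
    (hq : ∀ t ∈ Icc a b, f t ≤ q) (hs : s ∈ lowerSums f a b) : s ≤ q * (b - a) := by
  obtain ⟨n, x, p, h0, hn, hmono, hp, rfl⟩ := hs
  have hab : a ≤ b := by rw [← h0, ← hn]; exact part_mono hmono 0 n (Nat.zero_le n) le_rfl
  calc ∑ i ∈ Finset.range n, p i * (x (i+1) - x i)
      ≤ ∑ i ∈ Finset.range n, q * (x (i+1) - x i) := by
        apply Finset.sum_le_sum
        intro i hi
        rw [Finset.mem_range] at hi
        have hΔ : 0 ≤ x (i+1) - x i := sub_nonneg.2 (hmono i hi)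
        rcases eq_or_lt_of_le (hmono i hi) with he | hlt
        · rw [← he]; simp
        · have hxm : x i ∈ Icc a b :=
            ⟨h0 ▸ part_mono hmono 0 i (Nat.zero_le i) hi.le,
             hn ▸ part_mono hmono i n hi.le le_rfl⟩
          have hpq : p i ≤ q :=
            (hp i hi (x i) ⟨le_rfl, hlt.le⟩).trans (hq (x i) hxm)
          exact mul_le_mul_of_nonneg_right hpq hΔ
    _ = q * (x n - x 0) := by rw [← Finset.mul_sum, Finset.sum_range_sub]
    _ = q * (b - a) := by rw [h0, hn]

lemma lowerSums_bddAbove {f : ℝ → ℝ} {a b q : ℝ}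
    (hq : ∀ t ∈ Icc a b, f t ≤ q) : BddAbove (lowerSums f a b) :=
  ⟨q * (b - a), fun _ hs => lowerSums_le hq hs⟩

lemma lowerSums_empty {f : ℝ → ℝ} {a b : ℝ} (hba : b < a) : lowerSums f a b = ∅ := by
  ext s
  simp only [Set.mem_empty_iff_false, iff_false]
  rintro ⟨n, x, p, h0, hn, hmono, hp, rfl⟩
  have : a ≤ b := by rw [← h0, ← hn]; exact part_mono hmono 0 n (Nat.zero_le n) le_rfl
  linarith

lemma lowerDarboux_empty' {f : ℝ → ℝ} {a b : ℝ} (hba : b < a) : sSup (lowerSums f a b) = 0 := by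
  rw [lowerSums_empty hba, Real.sSup_empty]


lemma neg_upperSums (f : ℝ → ℝ) (a b : ℝ) :
    lowerSums (fun t => -f t) a b = -upperSums f a b := by
  ext s
  simp only [Set.mem_neg, lowerSums, upperSums, Set.mem_setOf_eq]
  constructor
  · rintro ⟨n, x, p, h0, hn, hm, hp, rfl⟩
    refine ⟨n, x, fun i => -p i, h0, hn, hm, ?_, ?_⟩
    · intro i hi t ht
      have := hp i hi t ht
      show f t ≤ -p i
      linarith
    · rw [← Finset.sum_neg_distrib]
      apply Finset.sum_congr rfl
      intro i _; ring
  · rintro ⟨n, x, q, h0, hn, hm, hq, hsum⟩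
    refine ⟨n, x, fun i => -q i, h0, hn, hm, ?_, ?_⟩
    · intro i hi t ht
      have := hq i hi t ht
      show -q i ≤ -f t
      linarith
    · have e : ∀ i, (fun i => -q i) i * (x (i+1) - x i) = -(q i * (x (i+1) - x i)) :=
        fun i => by ring
      simp only [e, Finset.sum_neg_distrib, ← hsum, neg_neg]

lemma upperDarboux_eq' (f : ℝ → ℝ) (a b : ℝ) :
    sInf (upperSums f a b) = -sSup (lowerSums (fun t => -f t) a b) := by
  rw [Real.sInf_def, neg_upperSums]

lemma lowerSums_concat {f : ℝ → ℝ} {a b c s t : ℝ}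
    (hs : s ∈ lowerSums f a b) (ht : t ∈ lowerSums f b c) : s + t ∈ lowerSums f a c := by
  obtain ⟨n, x, p, hx0, hxn, hxm, hxp, rfl⟩ := hs
  obtain ⟨m, y, q, hy0, hym, hymo, hyq, rfl⟩ := ht
  refine ⟨n + m, fun i => if i < n then x i else y (i - n),
    fun i => if i < n then p i else q (i - n), ?_, ?_, ?_, ?_, ?_⟩
  · show (if 0 < n then x 0 else y (0 - n)) = a
    by_cases h : 0 < n
    · rw [if_pos h, hx0]
    · have hn0 : n = 0 := by omega
      subst hn0
      rw [if_neg h, Nat.sub_zero, hy0, ← hxn, hx0]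
  · show (if n + m < n then x (n + m) else y (n + m - n)) = c
    have h1 : ¬ (n + m < n) := by omega
    rw [if_neg h1, Nat.add_sub_cancel_left, hym]
  · intro i hi
    show (if i < n then x i else y (i - n)) ≤ (if i + 1 < n then x (i + 1) else y (i + 1 - n))
    by_cases h1 : i + 1 < n
    · have h2 : i < n := by omega
      rw [if_pos h1, if_pos h2]
      exact hxm i h2
    · by_cases h2 : i < n
      · have hn2 : i + 1 = n := by omega
        have e0 : i + 1 - n = 0 := by omega
        rw [if_neg h1, if_pos h2, e0, hy0, ← hxn, ← hn2]
        exact hxm i h2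
      · have h3 : i + 1 - n = (i - n) + 1 := by omega
        rw [if_neg h1, if_neg h2, h3]
        exact hymo (i - n) (by omega)
  · intro i hi tt htt
    show (if i < n then p i else q (i - n)) ≤ f tt
    have htt' : tt ∈ Icc (if i < n then x i else y (i - n))
        (if i + 1 < n then x (i + 1) else y (i + 1 - n)) := htt
    by_cases h1 : i + 1 < n
    · have h2 : i < n := by omega
      rw [if_pos h1, if_pos h2] at htt'
      rw [if_pos h2]
      exact hxp i h2 tt htt'
    · by_cases h2 : i < n
      · have hn2 : i + 1 = n := by omega
        have e0 : i + 1 - n = 0 := by omega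
        rw [if_neg h1, if_pos h2, e0, hy0, ← hxn, ← hn2] at htt'
        rw [if_pos h2]
        exact hxp i h2 tt htt'
      · have h3 : i + 1 - n = (i - n) + 1 := by omega
        rw [if_neg h1, if_neg h2, h3] at htt'
        rw [if_neg h2]
        exact hyq (i - n) (by omega) tt htt'
  · rw [Finset.sum_range_add]
    congr 1
    · apply Finset.sum_congr rfl
      intro i hi
      rw [Finset.mem_range] at hi
      show p i * (x (i + 1) - x i) = (if i < n then p i else q (i - n)) *
          ((if i + 1 < n then x (i + 1) else y (i + 1 - n)) -
            (if i < n then x i else y (i - n)))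
      by_cases h1 : i + 1 < n
      · rw [if_pos h1, if_pos hi, if_pos hi]
      · have hn2 : i + 1 = n := by omega
        have e0 : i + 1 - n = 0 := by omega
        rw [if_neg h1, if_pos hi, if_pos hi, e0, hy0, ← hxn, ← hn2]
    · apply Finset.sum_congr rfl
      intro i hi
      rw [Finset.mem_range] at hi
      show q i * (y (i + 1) - y i) = (if n + i < n then p (n + i) else q (n + i - n)) *
          ((if n + i + 1 < n then x (n + i + 1) else y (n + i + 1 - n)) -
            (if n + i < n then x (n + i) else y (n + i - n)))
      have h1 : ¬ (n + i < n) := by omega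
      have h2 : ¬ (n + i + 1 < n) := by omega
      have h3 : n + i - n = i := by omega
      have h4 : n + i + 1 - n = i + 1 := by omega
      rw [if_neg h1, if_neg h2, if_neg h1, h3, h4]


lemma lowerSums_split {f : ℝ → ℝ} {a b c s : ℝ} (hab : a ≤ b) (hbc : b ≤ c)
    (hs : s ∈ lowerSums f a c) :
    ∃ s1 ∈ lowerSums f a b, ∃ s2 ∈ lowerSums f b c, s = s1 + s2 := by
  obtain ⟨n, x, p, hx0, hxn, hxm, hxp, rfl⟩ := hs
  set y : ℕ → ℝ := fun i => min (x i) b with hy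
  set z : ℕ → ℝ := fun i => max (x i) b with hz
  set p1 : ℕ → ℝ := fun i => if y (i + 1) ≤ y i then f (y i) else p i with hp1
  set p2 : ℕ → ℝ := fun i => if z (i + 1) ≤ z i then f (z i) else p i with hp2
  refine ⟨∑ i ∈ Finset.range n, p1 i * (y (i + 1) - y i), ?_,
          ∑ i ∈ Finset.range n, p2 i * (z (i + 1) - z i), ?_, ?_⟩
  · refine ⟨n, y, p1, ?_, ?_, ?_, ?_, rfl⟩
    · show min (x 0) b = a
      rw [hx0]; exact min_eq_left hab
    · show min (x n) b = b
      rw [hxn]; exact min_eq_right hbc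
    · intro i hi
      exact min_le_min (hxm i hi) le_rfl
    · intro i hi t ht
      have hmono : y i ≤ y (i + 1) := min_le_min (hxm i hi) le_rfl
      by_cases h : y (i + 1) ≤ y i
      · have heq : y i = y (i + 1) := le_antisymm hmono h
        have : t = y i := le_antisymm (heq ▸ ht.2) ht.1
        rw [hp1]
        show (if y (i + 1) ≤ y i then f (y i) else p i) ≤ f t
        rw [if_pos h, this]
      · rw [hp1]
        show (if y (i + 1) ≤ y i then f (y i) else p i) ≤ f t
        rw [if_neg h]
        rcases le_total (x i) b with h1 | h1
        · have hyi : y i = x i := min_eq_left h1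
          refine hxp i hi t ⟨hyi ▸ ht.1, ht.2.trans (min_le_left _ _)⟩
        · exfalso
          apply h
          have hyi : y i = b := min_eq_right h1
          rw [hyi]
          exact min_le_right _ _
  · refine ⟨n, z, p2, ?_, ?_, ?_, ?_, rfl⟩
    · show max (x 0) b = b
      rw [hx0]; exact max_eq_right hab
    · show max (x n) b = c
      rw [hxn]; exact max_eq_left hbc
    · intro i hi
      exact max_le_max (hxm i hi) le_rfl
    · intro i hi t ht
      have hmono : z i ≤ z (i + 1) := max_le_max (hxm i hi) le_rfl
      by_cases h : z (i + 1) ≤ z i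
      · have heq : z i = z (i + 1) := le_antisymm hmono h
        have : t = z i := le_antisymm (heq ▸ ht.2) ht.1
        rw [hp2]
        show (if z (i + 1) ≤ z i then f (z i) else p i) ≤ f t
        rw [if_pos h, this]
      · rw [hp2]
        show (if z (i + 1) ≤ z i then f (z i) else p i) ≤ f t
        rw [if_neg h]
        rcases le_total b (x (i + 1)) with h1 | h1
        · have hzi : z (i + 1) = x (i + 1) := max_eq_left h1
          refine hxp i hi t ⟨(le_max_left _ _).trans ht.1, hzi ▸ ht.2⟩
        · exfalso
          apply h
          have hzi : z (i + 1) = b := max_eq_right h1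
          rw [hzi]
          exact le_max_right _ _
  · rw [← Finset.sum_add_distrib]
    apply Finset.sum_congr rfl
    intro i hi
    rw [Finset.mem_range] at hi
    have key : (y (i + 1) - y i) + (z (i + 1) - z i) = x (i + 1) - x i := by
      have h1 : min (x (i+1)) b + max (x (i+1)) b = x (i+1) + b := min_add_max _ _
      have h2 : min (x i) b + max (x i) b = x i + b := min_add_max _ _
      show (min (x (i+1)) b - min (x i) b) + (max (x (i+1)) b - max (x i) b) = x (i+1) - x i
      linarith
    have e1 : p1 i * (y (i + 1) - y i) = p i * (y (i + 1) - y i) := by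
      by_cases h : y (i + 1) ≤ y i
      · have hmono : y i ≤ y (i + 1) := min_le_min (hxm i hi) le_rfl
        have : y (i + 1) - y i = 0 := by
          have := le_antisymm hmono h; linarith [this]
        rw [this]; ring
      · rw [hp1]
        show (if y (i + 1) ≤ y i then f (y i) else p i) * _ = _
        rw [if_neg h]
    have e2 : p2 i * (z (i + 1) - z i) = p i * (z (i + 1) - z i) := by
      by_cases h : z (i + 1) ≤ z i
      · have hmono : z i ≤ z (i + 1) := max_le_max (hxm i hi) le_rfl
        have : z (i + 1) - z i = 0 := by
          have := le_antisymm hmono h; linarith [this]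
        rw [this]; ring
      · rw [hp2]
        show (if z (i + 1) ≤ z i then f (z i) else p i) * _ = _
        rw [if_neg h]
    rw [e1, e2, ← mul_add, key]


lemma lowerDarboux_split {f : ℝ → ℝ} {a b c P Q : ℝ} (hab : a ≤ b) (hbc : b ≤ c)
    (hP : ∀ t ∈ Icc a c, P ≤ f t) (hQ : ∀ t ∈ Icc a c, f t ≤ Q) :
    lowerDarboux f a c = lowerDarboux f a b + lowerDarboux f b c := by
  have hac : a ≤ c := hab.trans hbc
  have hPab : ∀ t ∈ Icc a b, P ≤ f t := fun t ht => hP t ⟨ht.1, ht.2.trans hbc⟩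
  have hQab : ∀ t ∈ Icc a b, f t ≤ Q := fun t ht => hQ t ⟨ht.1, ht.2.trans hbc⟩
  have hPbc : ∀ t ∈ Icc b c, P ≤ f t := fun t ht => hP t ⟨hab.trans ht.1, ht.2⟩
  have hQbc : ∀ t ∈ Icc b c, f t ≤ Q := fun t ht => hQ t ⟨hab.trans ht.1, ht.2⟩
  have ne_ab : (lowerSums f a b).Nonempty := ⟨_, lowerSums_nonempty hab hPab⟩
  have ne_bc : (lowerSums f b c).Nonempty := ⟨_, lowerSums_nonempty hbc hPbc⟩
  have ne_ac : (lowerSums f a c).Nonempty := ⟨_, lowerSums_nonempty hac hP⟩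
  have bd_ab := lowerSums_bddAbove hQab
  have bd_bc := lowerSums_bddAbove hQbc
  have bd_ac := lowerSums_bddAbove hQ
  unfold lowerDarboux
  apply le_antisymm
  · apply csSup_le ne_ac
    intro s hs
    obtain ⟨s1, hs1, s2, hs2, rfl⟩ := lowerSums_split hab hbc hs
    exact add_le_add (le_csSup bd_ab hs1) (le_csSup bd_bc hs2)
  · have h1 : sSup (lowerSums f a b) ≤ sSup (lowerSums f a c) - sSup (lowerSums f b c) := by
      apply csSup_le ne_ab
      intro s1 hs1
      have h2 : sSup (lowerSums f b c) ≤ sSup (lowerSums f a c) - s1 := by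
        apply csSup_le ne_bc
        intro s2 hs2
        have := le_csSup bd_ac (lowerSums_concat hs1 hs2)
        linarith
      linarith
    linarith

lemma prePrim_neg {J : Set ℝ} {f F : ℝ → ℝ} (h : PrePrimitive J f F) :
    PrePrimitive J (fun t => -f t) (fun t => -F t) := by
  intro x hx y hy hxy p q hpq
  obtain ⟨h1, h2⟩ := h x hx y hy hxy (-q) (-p) (fun t ht => by
    obtain ⟨ha, hb⟩ := hpq t ht
    constructor <;> [skip; skip] <;> simp only at ha hb ⊢ <;> linarith)
  have e : (-F y - -F x) / (y - x) = -((F y - F x) / (y - x)) := by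
    rw [show -F y - -F x = -(F y - F x) from by ring, neg_div]
  simp only
  rw [e]
  constructor <;> linarith

lemma prePrim_of_lt {J : Set ℝ} {f F : ℝ → ℝ}
    (h : ∀ x ∈ J, ∀ y ∈ J, x < y → ∀ p q : ℝ,
      (∀ t ∈ Set.Icc x y, p ≤ f t ∧ f t ≤ q) →
      p ≤ (F y - F x) / (y - x) ∧ (F y - F x) / (y - x) ≤ q) :
    PrePrimitive J f F := by
  intro x hx y hy hxy p q hpq
  rcases hxy.lt_or_gt with hlt | hlt
  · exact h x hx y hy hlt p q (fun t ht => hpq t (by rw [uIcc_of_le hlt.le]; exact ht))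
  · have e : (F y - F x) / (y - x) = (F x - F y) / (x - y) := by
      rw [← neg_sub (F x), ← neg_sub x, neg_div_neg_eq]
    rw [e]
    exact h y hy x hx hlt p q (fun t ht => hpq t (by rw [uIcc_of_ge hlt.le]; exact ht))

lemma lowerSum_le_of_prePrim {J : Set ℝ} (hJ : J.OrdConnected) {f F : ℝ → ℝ}
    (hF : PrePrimitive J f F) {x y : ℝ} (hx : x ∈ J) (hy : y ∈ J) (hxy : x ≤ y)
    {Q : ℝ} (hQ : ∀ t ∈ Icc x y, f t ≤ Q) {s : ℝ} (hs : s ∈ lowerSums f x y) :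
    s ≤ F y - F x := by
  obtain ⟨n, pts, p, h0, hn, hm, hp, rfl⟩ := hs
  have hIcc : ∀ i ≤ n, pts i ∈ Icc x y := fun i hi =>
    ⟨h0 ▸ part_mono hm 0 i (Nat.zero_le i) hi, hn ▸ part_mono hm i n hi le_rfl⟩
  have hmem : ∀ i ≤ n, pts i ∈ J := fun i hi => hJ.out hx hy (hIcc i hi)
  calc ∑ i ∈ Finset.range n, p i * (pts (i + 1) - pts i)
      ≤ ∑ i ∈ Finset.range n, (F (pts (i + 1)) - F (pts i)) := by
        apply Finset.sum_le_sum
        intro i hi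
        rw [Finset.mem_range] at hi
        rcases eq_or_lt_of_le (hm i hi) with he | hlt
        · rw [← he]; simp
        · have hΔ : (0:ℝ) < pts (i + 1) - pts i := sub_pos.2 hlt
          have hb : ∀ t ∈ Set.uIcc (pts i) (pts (i + 1)), p i ≤ f t ∧ f t ≤ Q := by
            intro t ht
            rw [uIcc_of_le hlt.le] at ht
            refine ⟨hp i hi t ht, hQ t ⟨(hIcc i hi.le).1.trans ht.1,
              ht.2.trans (hIcc (i + 1) hi).2⟩⟩
          have := (hF (pts i) (hmem i hi.le) (pts (i + 1)) (hmem (i + 1) hi)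
            (ne_of_lt hlt) (p i) Q hb).1
          rw [le_div_iff₀ hΔ] at this
          linarith
    _ = F (pts n) - F (pts 0) := Finset.sum_range_sub (fun i => F (pts i)) n
    _ = F y - F x := by rw [h0, hn]

/-- The candidate lower primitive based at `o`. -/
lemma L_sub {J : Set ℝ} (hJ : J.OrdConnected) {f : ℝ → ℝ} (hbd : BoundedOnCompacts J f)
    {o : ℝ} (ho : o ∈ J) {x y : ℝ} (hx : x ∈ J) (hy : y ∈ J) (hxy : x < y) :
    (lowerDarboux f o y - lowerDarboux f y o) - (lowerDarboux f o x - lowerDarboux f x o)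
      = lowerDarboux f x y := by
  have Dempty : ∀ u v : ℝ, v < u → lowerDarboux f u v = 0 := by
    intro u v huv
    unfold lowerDarboux
    rw [lowerSums_empty huv, Real.sSup_empty]
  rcases lt_trichotomy o x with h1 | rfl | h1
  · -- o < x < y
    obtain ⟨P, Q, hPQ⟩ := hbd o ho y hy
    have hadd : lowerDarboux f o y = lowerDarboux f o x + lowerDarboux f x y :=
      lowerDarboux_split h1.le hxy.le (fun t ht => (hPQ t ht).1) (fun t ht => (hPQ t ht).2)
    rw [Dempty y o (h1.trans hxy), Dempty x o h1, hadd]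
    ring
  · rw [Dempty y o hxy, sub_self]
    ring
  · rcases lt_trichotomy o y with h2 | rfl | h2
    · -- x < o < y
      obtain ⟨P, Q, hPQ⟩ := hbd x hx y hy
      have hadd : lowerDarboux f x y = lowerDarboux f x o + lowerDarboux f o y :=
        lowerDarboux_split h1.le h2.le (fun t ht => (hPQ t ht).1) (fun t ht => (hPQ t ht).2)
      rw [Dempty y o h2, Dempty o x h1, hadd]
      ring
    · rw [sub_self, Dempty o x h1]
      ring
    · -- x < y < o
      obtain ⟨P, Q, hPQ⟩ := hbd x hx o ho
      have hadd : lowerDarboux f x o = lowerDarboux f x y + lowerDarboux f y o :=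
        lowerDarboux_split hxy.le h2.le (fun t ht => (hPQ t ht).1) (fun t ht => (hPQ t ht).2)
      rw [Dempty o x h1, Dempty o y h2, hadd]
      ring

lemma L_prePrim {J : Set ℝ} (hJ : J.OrdConnected) {f : ℝ → ℝ} (hbd : BoundedOnCompacts J f)
    {o : ℝ} (ho : o ∈ J) :
    PrePrimitive J f (fun x => lowerDarboux f o x - lowerDarboux f x o) := by
  apply prePrim_of_lt
  intro x hx y hy hxy p q hpq
  have hd := L_sub hJ hbd ho hx hy hxy
  rw [show ((fun x => lowerDarboux f o x - lowerDarboux f x o) y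
      - (fun x => lowerDarboux f o x - lowerDarboux f x o) x) = lowerDarboux f x y from hd]
  have hp' : ∀ t ∈ Icc x y, p ≤ f t := fun t ht => (hpq t ht).1
  have hq' : ∀ t ∈ Icc x y, f t ≤ q := fun t ht => (hpq t ht).2
  have hne : (lowerSums f x y).Nonempty := ⟨_, lowerSums_nonempty hxy.le hp'⟩
  have hΔ : (0:ℝ) < y - x := sub_pos.2 hxy
  constructor
  · rw [le_div_iff₀ hΔ]
    exact le_csSup (lowerSums_bddAbove hq') (lowerSums_nonempty hxy.le hp')
  · rw [div_le_iff₀ hΔ]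
    exact csSup_le hne (fun s hs => lowerSums_le hq' hs)

theorem stmt13 (J : Set ℝ) (hJ : J.OrdConnected) (f : ℝ → ℝ)
    (hbd : BoundedOnCompacts J f) :
    DarbouxIntegrableOnCompacts J f ↔
      (∀ F G : ℝ → ℝ, PrePrimitive J f F → PrePrimitive J f G →
        ∃ C : ℝ, ∀ x ∈ J, F x - G x = C) := by
  have hbdneg : BoundedOnCompacts J (fun t => -f t) := by
    intro a ha b hb
    obtain ⟨P, Q, hPQ⟩ := hbd a ha b hb
    exact ⟨-Q, -P, fun t ht => ⟨by show -Q ≤ -f t; linarith [(hPQ t ht).2],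
      by show -f t ≤ -P; linarith [(hPQ t ht).1]⟩⟩
  constructor
  · intro hint F G hF hG
    rcases J.eq_empty_or_nonempty with rfl | ⟨o, ho⟩
    · exact ⟨0, by simp⟩
    refine ⟨F o - G o, ?_⟩
    have key : ∀ u ∈ J, ∀ v ∈ J, u < v → F v - F u = G v - G u := by
      intro u hu v hv huv
      obtain ⟨P, Q, hPQ⟩ := hbd u hu v hv
      have hP : ∀ t ∈ Icc u v, P ≤ f t := fun t ht => (hPQ t ht).1
      have hQ : ∀ t ∈ Icc u v, f t ≤ Q := fun t ht => (hPQ t ht).2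
      have hne : (lowerSums f u v).Nonempty := ⟨_, lowerSums_nonempty huv.le hP⟩
      have hneN : (lowerSums (fun t => -f t) u v).Nonempty :=
        ⟨_, lowerSums_nonempty (f := fun t => -f t) (p := -Q) huv.le
          (fun t ht => by show -Q ≤ -f t; linarith [hQ t ht])⟩
      have low_le : ∀ H : ℝ → ℝ, PrePrimitive J f H → lowerDarboux f u v ≤ H v - H u :=
        fun H hH => csSup_le hne
          (fun s hs => lowerSum_le_of_prePrim hJ hH hu hv huv.le hQ hs)
      have le_up : ∀ H : ℝ → ℝ, PrePrimitive J f H → H v - H u ≤ upperDarboux f u v := by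
        intro H hH
        have h1 : lowerDarboux (fun t => -f t) u v ≤ (fun t => -H t) v - (fun t => -H t) u :=
          csSup_le hneN (fun s hs => lowerSum_le_of_prePrim hJ (prePrim_neg hH) hu hv huv.le
            (Q := -P) (fun t ht => by show -f t ≤ -P; linarith [hP t ht]) hs)
        simp only at h1
        rw [upperDarboux, upperDarboux_eq']
        show  H v - H u ≤ -(lowerDarboux (fun t => -f t) u v)
        linarith
      have hFl := low_le F hF
      have hFu := le_up F hF
      have hGl := low_le G hG
      have hGu := le_up G hG
      have heq := hint u hu v hv huv
      linarith [heq]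
    intro x hxJ
    rcases lt_trichotomy x o with h | rfl | h
    · have := key x hxJ o ho h; linarith
    · rfl
    · have := key o ho x hxJ h; linarith
  · intro hpp a ha b hb hab
    have hL : PrePrimitive J f (fun x => lowerDarboux f a x - lowerDarboux f x a) :=
      L_prePrim hJ hbd ha
    have hL' : PrePrimitive J (fun t => -f t)
        (fun x => lowerDarboux (fun t => -f t) a x - lowerDarboux (fun t => -f t) x a) :=
      L_prePrim hJ hbdneg ha
    have hU : PrePrimitive J f
        (fun x => -(lowerDarboux (fun t => -f t) a x - lowerDarboux (fun t => -f t) x a)) := by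
      have h2 := prePrim_neg hL'
      have e : (fun t => -(-f t)) = f := by funext t; ring
      rwa [e] at h2
    obtain ⟨C, hC⟩ := hpp _ _ hL hU
    have h1 := hC a ha
    have h2 := hC b hb
    simp only [sub_self, neg_zero, sub_zero] at h1
    have Dba : lowerDarboux f b a = 0 := by
      unfold lowerDarboux; rw [lowerSums_empty hab, Real.sSup_empty]
    have Dba' : lowerDarboux (fun t => -f t) b a = 0 := by
      unfold lowerDarboux; rw [lowerSums_empty hab, Real.sSup_empty]
    rw [Dba, Dba'] at h2
    rw [upperDarboux, upperDarboux_eq']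
    rw [← h1] at h2
    show lowerDarboux f a b = -lowerDarboux (fun t => -f t) a b
    linarith [h2]
end
end

section
/- If f : J → ℝ is bounded on compact subintervals and has a right-hand limit at every point of J (or a left-hand limit at every point of J), then f is Riemann (Darboux) integrable on every compact subinterval of J. -/
open Set Filter Topology

noncomputable section

/-!
Fix `ε > 0`. By continuous induction on `c ∈ [a, b]`, for every `η > 0` some upper and some
lower Darboux sum of `f` on `[a, c]` differ by at most `ε (c - a) + η`. The property passes to the
supremum from the left because `f` is bounded, and it spreads to the right of `c` because `f` stays
within `ε / 2` of its right limit at `c` on a short interval `(c, d)`. At `c = b` this is the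
Riemann criterion. Left limits reduce to right limits under `t ↦ -t`.
-/

open scoped Pointwise

section DarbouxSums

variable {f : ℝ → ℝ} {a b c d s : ℝ}

theorem mem_upperSums_iff_neg_mem_lowerSums :
    s ∈ upperSums f a b ↔ -s ∈ lowerSums (-f) a b := by
  constructor
  · rintro ⟨n, x, q, hx0, hxn, hx, hq, rfl⟩
    refine ⟨n, x, -q, hx0, hxn, hx, fun i hi t ht => neg_le_neg (hq i hi t ht), ?_⟩
    simp [Finset.sum_neg_distrib]
  · rintro ⟨n, x, p, hx0, hxn, hx, hp, hs⟩
    refine ⟨n, x, -p, hx0, hxn, hx, fun i hi t ht => le_neg.mpr (hp i hi t ht), ?_⟩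
    simp [Finset.sum_neg_distrib, ← hs]

theorem upperSums_eq_neg_lowerSums_neg : upperSums f a b = -lowerSums (-f) a b := by
  ext s
  exact mem_upperSums_iff_neg_mem_lowerSums

theorem zero_mem_lowerSums_self : (0 : ℝ) ∈ lowerSums f a a :=
  ⟨0, fun _ => a, 0, rfl, rfl, by simp, by simp, by simp⟩

theorem zero_mem_upperSums_self : (0 : ℝ) ∈ upperSums f a a := by
  simpa [mem_upperSums_iff_neg_mem_lowerSums] using zero_mem_lowerSums_self

theorem add_mem_lowerSums (hs : s ∈ lowerSums f a c) (hcd : c ≤ d) {p : ℝ}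
    (hp : ∀ t ∈ Icc c d, p ≤ f t) : s + p * (d - c) ∈ lowerSums f a d := by
  obtain ⟨n, x, q, hx0, hxn, hx, hq, rfl⟩ := hs
  refine ⟨n + 1, fun i => if i ≤ n then x i else d, fun i => if i < n then q i else p,
    by simp [hx0], by simp, fun i hi => ?_, fun i hi => ?_, ?_⟩
  · rcases Nat.lt_succ_iff_lt_or_eq.mp hi with hi | rfl
    · simpa [hi.le, Nat.succ_le_of_lt hi] using hx i hi
    · simpa [hxn] using hcd
  · rcases Nat.lt_succ_iff_lt_or_eq.mp hi with hi | rfl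
    · simpa [hi, hi.le, Nat.succ_le_of_lt hi] using hq i hi
    · simpa [hxn] using hp
  · rw [Finset.sum_range_succ]
    simp only [lt_irrefl, le_refl, if_true, if_false, Nat.not_succ_le_self, hxn]
    congr 1
    refine Finset.sum_congr rfl fun i hi => ?_
    have hi := Finset.mem_range.mp hi
    simp [hi, hi.le, Nat.succ_le_of_lt hi]

theorem add_mem_upperSums (hs : s ∈ upperSums f a c) (hcd : c ≤ d) {q : ℝ}
    (hq : ∀ t ∈ Icc c d, f t ≤ q) : s + q * (d - c) ∈ upperSums f a d := by
  rw [mem_upperSums_iff_neg_mem_lowerSums] at hs ⊢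
  convert add_mem_lowerSums hs hcd (p := -q) fun t ht => neg_le_neg (hq t ht) using 1
  ring

theorem lowerSums_subset_comp_neg :
    lowerSums f a b ⊆ lowerSums (fun t => f (-t)) (-b) (-a) := by
  rintro s ⟨n, x, p, hx0, hxn, hx, hp, rfl⟩
  refine ⟨n, fun i => -x (n - i), fun i => p (n - 1 - i), by simp [hxn], by simp [hx0],
    fun i hi => ?_, fun i hi t ht => ?_, ?_⟩ <;> dsimp only at *
  · have := hx (n - 1 - i) (by omega)
    rw [show n - 1 - i + 1 = n - i by omega] at this
    simpa [show n - (i + 1) = n - 1 - i by omega] using this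
  · have := hp (n - 1 - i) (by omega) (-t)
    rw [show n - 1 - i + 1 = n - i by omega] at this
    rw [show n - (i + 1) = n - 1 - i by omega] at ht
    exact this ⟨le_neg.mpr ht.2, neg_le.mpr ht.1⟩
  · rw [← Finset.sum_range_reflect]
    refine Finset.sum_congr rfl fun i hi => ?_
    rw [show n - 1 - i + 1 = n - i by have := Finset.mem_range.mp hi; omega,
      show n - (i + 1) = n - 1 - i by omega]
    ring

theorem lowerSums_comp_neg : lowerSums (fun t => f (-t)) (-b) (-a) = lowerSums f a b :=
  Subset.antisymm
    (by simpa using lowerSums_subset_comp_neg (f := fun t => f (-t)) (a := -b) (b := -a))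
    lowerSums_subset_comp_neg

theorem upperSums_comp_neg : upperSums (fun t => f (-t)) (-b) (-a) = upperSums f a b := by
  rw [upperSums_eq_neg_lowerSums_neg, upperSums_eq_neg_lowerSums_neg,
    ← lowerSums_comp_neg (f := -f)]
  rfl

end DarbouxSums

open MeasureTheory

theorem exists_monotone_extension_of_le_succ {α : Type*} [Preorder α] {n : ℕ} {x : ℕ → α}
    (hx : ∀ i < n, x i ≤ x (i + 1)) : ∃ y : ℕ → α, Monotone y ∧ ∀ i ≤ n, y i = x i := by
  refine ⟨fun i => x (min i n), monotone_nat_of_le_succ fun i => ?_, fun i hi => by simp [hi]⟩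
  rcases lt_or_ge i n with hi | hi
  · simpa [hi.le, Nat.succ_le_of_lt hi] using hx i hi
  · simp [hi, hi.trans (Nat.le_succ i)]

section StepFunction

def stepFunction (x p : ℕ → ℝ) (n : ℕ) (t : ℝ) : ℝ :=
  ∑ i ∈ Finset.range n, (Ico (x i) (x (i + 1))).indicator (fun _ => p i) t

variable {x : ℕ → ℝ} (p : ℕ → ℝ) (n : ℕ)

theorem integrable_stepFunction : Integrable (stepFunction x p n) :=
  integrable_finsetSum _ fun i _ =>
    (integrable_indicator_iff measurableSet_Ico).2 (integrableOn_const (by simp))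

theorem integral_stepFunction (hx : Monotone x) :
    ∫ t, stepFunction x p n t = ∑ i ∈ Finset.range n, p i * (x (i + 1) - x i) := by
  simp only [stepFunction]
  rw [integral_finsetSum _ fun i _ => ?_]
  · refine Finset.sum_congr rfl fun i _ => ?_
    rw [integral_indicator_const _ measurableSet_Ico,
      Real.volume_real_Ico_of_le (hx (Nat.le_succ i)), smul_eq_mul, mul_comm]
  · exact (integrable_indicator_iff measurableSet_Ico).2 (integrableOn_const (by simp))

theorem stepFunction_eq (hx : Monotone x) {i : ℕ} (hi : i < n) {t : ℝ}
    (ht : t ∈ Ico (x i) (x (i + 1))) : stepFunction x p n t = p i := by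
  rw [stepFunction, Finset.sum_eq_single_of_mem i (Finset.mem_range.2 hi)]
  · exact indicator_of_mem ht _
  · intro j _ hji
    exact indicator_of_notMem
      (fun htj => disjoint_left.mp (hx.pairwise_disjoint_on_Ico_succ hji) htj ht) _

theorem stepFunction_eq_zero (hx : Monotone x) {t : ℝ} (ht : t ∉ Ico (x 0) (x n)) :
    stepFunction x p n t = 0 :=
  Finset.sum_eq_zero fun i hi => indicator_of_notMem (fun hti =>
    ht ⟨(hx (Nat.zero_le i)).trans hti.1, hti.2.trans_le (hx (Finset.mem_range.1 hi))⟩) _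

end StepFunction

section DarbouxIntegral

variable {f : ℝ → ℝ} {a b c d r L U : ℝ}

theorem exists_integral_eq_of_mem_lowerSums (hL : L ∈ lowerSums f a b) :
    ∃ φ : ℝ → ℝ, Integrable φ ∧ (∀ t ∈ Ico a b, φ t ≤ f t) ∧ (∀ t ∉ Ico a b, φ t = 0) ∧
      ∫ t, φ t = L := by
  obtain ⟨n, x, p, hx0, hxn, hx, hp, rfl⟩ := hL
  obtain ⟨y, hy, hyx⟩ := exists_monotone_extension_of_le_succ hx
  have hyab : Ico (y 0) (y n) = Ico a b := by rw [hyx 0 n.zero_le, hyx n le_rfl, hx0, hxn]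
  refine ⟨stepFunction y p n, integrable_stepFunction p n, fun t ht => ?_,
    fun t ht => stepFunction_eq_zero p n hy (hyab ▸ ht), ?_⟩
  · obtain ⟨i, hi, hti⟩ := mem_iUnion₂.1 (Ico_subset_biUnion_Ico n y (hyab ▸ ht))
    have hi := Finset.mem_range.1 hi
    rw [stepFunction_eq p n hy hi hti]
    rw [hyx i hi.le, hyx (i + 1) hi] at hti
    exact hp i hi t (Ico_subset_Icc_self hti)
  · rw [integral_stepFunction p n hy]
    refine Finset.sum_congr rfl fun i hi => ?_
    have hi := Finset.mem_range.1 hi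
    rw [hyx i hi.le, hyx (i + 1) hi]

/-- Both sums are integrals of step functions squeezing `f` on `[a, b)`, so no common refinement
of the two partitions is needed. -/
theorem le_of_mem_lowerSums_of_mem_upperSums (hL : L ∈ lowerSums f a b)
    (hU : U ∈ upperSums f a b) : L ≤ U := by
  obtain ⟨φ, hφ, hφf, hφ0, rfl⟩ := exists_integral_eq_of_mem_lowerSums hL
  rw [mem_upperSums_iff_neg_mem_lowerSums] at hU
  obtain ⟨ψ, hψ, hψf, hψ0, hψU⟩ := exists_integral_eq_of_mem_lowerSums hU
  calc ∫ t, φ t ≤ ∫ t, -ψ t := integral_mono hφ hψ.neg fun t => ?_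
    _ = U := by rw [integral_neg, hψU, neg_neg]
  by_cases ht : t ∈ Ico a b
  · linarith [hφf t ht, show ψ t ≤ -f t from hψf t ht]
  · simp [hφ0 t ht, hψ0 t ht]

def DarbouxSumsWithin (f : ℝ → ℝ) (a b r : ℝ) : Prop :=
  ∃ L ∈ lowerSums f a b, ∃ U ∈ upperSums f a b, U - L ≤ r

theorem lowerDarboux_eq_upperDarboux_of_forall_darbouxSumsWithin
    (h : ∀ r > 0, DarbouxSumsWithin f a b r) : lowerDarboux f a b = upperDarboux f a b := by
  obtain ⟨L₀, hL₀, U₀, hU₀, -⟩ := h 1 one_pos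
  have hbddL : BddAbove (lowerSums f a b) :=
    ⟨U₀, fun L hL => le_of_mem_lowerSums_of_mem_upperSums hL hU₀⟩
  have hbddU : BddBelow (upperSums f a b) :=
    ⟨L₀, fun U hU => le_of_mem_lowerSums_of_mem_upperSums hL₀ hU⟩
  refine le_antisymm (le_csInf ⟨U₀, hU₀⟩ fun U hU => csSup_le ⟨L₀, hL₀⟩ fun L hL =>
    le_of_mem_lowerSums_of_mem_upperSums hL hU) (le_of_forall_pos_le_add fun r hr => ?_)
  obtain ⟨L, hL, U, hU, hUL⟩ := h r hr
  calc upperDarboux f a b ≤ U := csInf_le hbddU hU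
    _ ≤ L + r := by linarith
    _ ≤ lowerDarboux f a b + r := by gcongr; exact le_csSup hbddL hL

theorem DarbouxSumsWithin.mono {r' : ℝ} (h : DarbouxSumsWithin f a b r) (hr : r ≤ r') :
    DarbouxSumsWithin f a b r' :=
  let ⟨L, hL, U, hU, hUL⟩ := h
  ⟨L, hL, U, hU, hUL.trans hr⟩

theorem darbouxSumsWithin_self (hr : 0 ≤ r) : DarbouxSumsWithin f a a r :=
  ⟨0, zero_mem_lowerSums_self, 0, zero_mem_upperSums_self, by simpa using hr⟩

theorem DarbouxSumsWithin.append {m M : ℝ} (h : DarbouxSumsWithin f a c r) (hcd : c ≤ d)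
    (hf : ∀ t ∈ Icc c d, m ≤ f t ∧ f t ≤ M) :
    DarbouxSumsWithin f a d (r + (M - m) * (d - c)) := by
  obtain ⟨L, hL, U, hU, hUL⟩ := h
  refine ⟨_, add_mem_lowerSums hL hcd fun t ht => (hf t ht).1,
    _, add_mem_upperSums hU hcd fun t ht => (hf t ht).2, ?_⟩
  linarith [show U + M * (d - c) - (L + m * (d - c)) = U - L + (M - m) * (d - c) by ring]

theorem lowerDarboux_comp_neg : lowerDarboux (fun t => f (-t)) (-b) (-a) = lowerDarboux f a b :=
  congrArg sSup lowerSums_comp_neg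

theorem upperDarboux_comp_neg : upperDarboux (fun t => f (-t)) (-b) (-a) = upperDarboux f a b :=
  congrArg sInf upperSums_comp_neg

end DarbouxIntegral

theorem continuous_induction_Icc {α : Type*} [ConditionallyCompleteLinearOrder α] {a b : α}
    {P : α → Prop} (hab : a ≤ b) (ha : P a)
    (hleft : ∀ c ∈ Ioc a b, (∀ c' ∈ Ico a c, ∃ x ∈ Ioc c' c, P x) → P c)
    (hright : ∀ c ∈ Ico a b, P c → ∃ d ∈ Ioc c b, P d) : P b := by
  set S := {x ∈ Icc a b | P x}
  have haS : a ∈ S := ⟨⟨le_rfl, hab⟩, ha⟩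
  have hbdd : BddAbove S := ⟨b, fun x hx => hx.1.2⟩
  have hc : sSup S ∈ Icc a b := ⟨le_csSup hbdd haS, csSup_le ⟨a, haS⟩ fun x hx => hx.1.2⟩
  have hPc : P (sSup S) := by
    rcases hc.1.eq_or_lt with h | h
    · exact h ▸ ha
    refine hleft _ ⟨h, hc.2⟩ fun c' hc' => ?_
    obtain ⟨x, hxS, hx⟩ := exists_lt_of_lt_csSup ⟨a, haS⟩ hc'.2
    exact ⟨x, ⟨hx, le_csSup hbdd hxS⟩, hxS.2⟩
  rcases hc.2.eq_or_lt with h | h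
  · exact h ▸ hPc
  obtain ⟨d, hd, hPd⟩ := hright _ ⟨hc.1, h⟩ hPc
  exact absurd (le_csSup hbdd ⟨⟨hc.1.trans hd.1.le, hd.2⟩, hPd⟩) hd.1.not_ge

theorem eventually_mul_abs_sub_lt (K : ℝ) {η : ℝ} (hη : 0 < η) (c : ℝ) :
    ∀ᶠ w in 𝓝 c, K * |w - c| < η := by
  have : Tendsto (fun w => K * |w - c|) (𝓝 c) (𝓝 0) := by
    simpa using (by fun_prop : Continuous fun w => K * |w - c|).tendsto c
  exact this.eventually_lt_const hη

section OneSidedLimits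

variable {f : ℝ → ℝ} {a b c m M ε : ℝ}

theorem darbouxSumsWithin_of_forall_exists_Ioc (hf : ∀ t ∈ Icc a c, m ≤ f t ∧ f t ≤ M)
    (hε : 0 ≤ ε) (hac : a < c)
    (h : ∀ c' ∈ Ico a c, ∃ x ∈ Ioc c' c,
      ∀ η > 0, DarbouxSumsWithin f a x (ε * (x - a) + η)) :
    ∀ η > 0, DarbouxSumsWithin f a c (ε * (c - a) + η) := by
  intro η hη
  obtain ⟨c', ⟨hac', hc'c⟩, hc'K⟩ := (Eventually.and (Ioo_mem_nhdsLT hac)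
    (nhdsWithin_le_nhds (eventually_mul_abs_sub_lt (M - m) (half_pos hη) c))).exists
  obtain ⟨x, ⟨hc'x, hxc⟩, hx⟩ := h c' ⟨hac'.le, hc'c⟩
  have hmM : m ≤ M := (hf c ⟨hac.le, le_rfl⟩).1.trans (hf c ⟨hac.le, le_rfl⟩).2
  refine ((hx (η / 2) (half_pos hη)).append hxc
    fun t ht => hf t ⟨hac'.le.trans (hc'x.le.trans ht.1), ht.2⟩).mono ?_
  have h₁ : (M - m) * (c - x) ≤ (M - m) * |c' - c| := by
    rw [abs_of_neg (sub_neg.2 hc'c)]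
    exact mul_le_mul_of_nonneg_left (by linarith) (sub_nonneg.2 hmM)
  have h₂ : ε * (x - a) ≤ ε * (c - a) := by gcongr
  linarith

/-- Just right of `c`, `f` stays within `ε / 2` of its right limit: a tiny piece `[c, w]` costs at
most `(M - m) (w - c)`, and the rest `[w, d]` costs at most `ε (d - w)`. -/
theorem exists_darbouxSumsWithin_of_tendsto_nhdsGT (hf : ∀ t ∈ Icc c b, m ≤ f t ∧ f t ≤ M)
    (hε : 0 < ε) (hcb : c < b) {L : ℝ} (hL : Tendsto f (𝓝[>] c) (𝓝 L))
    (hc : ∀ η > 0, DarbouxSumsWithin f a c (ε * (c - a) + η)) :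
    ∃ d ∈ Ioc c b, ∀ η > 0, DarbouxSumsWithin f a d (ε * (d - a) + η) := by
  have hnear : ∀ᶠ t in 𝓝[>] c, f t ∈ Icc (L - ε / 2) (L + ε / 2) :=
    hL (Icc_mem_nhds (by linarith) (by linarith))
  obtain ⟨u, hcu, hu⟩ := mem_nhdsGT_iff_exists_Ioo_subset.1 hnear
  obtain ⟨d, hcd, hd⟩ := exists_between (lt_min hcu hcb)
  have hdu : d < u := hd.trans_le (min_le_left _ _)
  have hdb : d ≤ b := hd.le.trans (min_le_right _ _)
  refine ⟨d, ⟨hcd, hdb⟩, fun η hη => ?_⟩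
  obtain ⟨w, ⟨hcw, hwd⟩, hwK⟩ := (Eventually.and (Ioo_mem_nhdsGT hcd)
    (nhdsWithin_le_nhds (eventually_mul_abs_sub_lt (M - m) (half_pos hη) c))).exists
  have hw := (hc (η / 2) (half_pos hη)).append hcw.le
    fun t ht => hf t ⟨ht.1, ht.2.trans (hwd.le.trans hdb)⟩
  refine (hw.append hwd.le fun t ht => hu ⟨hcw.trans_le ht.1, ht.2.trans_lt hdu⟩).mono ?_
  rw [abs_of_pos (sub_pos.2 hcw)] at hwK
  have : 0 ≤ ε * (w - c) := mul_nonneg hε.le (sub_nonneg.2 hcw.le)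
  linarith [show (L + ε / 2 - (L - ε / 2)) * (d - w) = ε * (d - a) - ε * (c - a) - ε * (w - c) by
    ring]

theorem forall_darbouxSumsWithin_of_tendsto_nhdsGT (hab : a ≤ b)
    (hf : ∀ t ∈ Icc a b, m ≤ f t ∧ f t ≤ M)
    (hlim : ∀ x ∈ Ico a b, ∃ L, Tendsto f (𝓝[>] x) (𝓝 L)) (hε : 0 < ε) :
    ∀ η > 0, DarbouxSumsWithin f a b (ε * (b - a) + η) :=
  continuous_induction_Icc (P := fun c => ∀ η > 0, DarbouxSumsWithin f a c (ε * (c - a) + η)) hab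
    (fun η hη => darbouxSumsWithin_self (by simpa using hη.le))
    (fun c hc => darbouxSumsWithin_of_forall_exists_Ioc
      (fun t ht => hf t ⟨ht.1, ht.2.trans hc.2⟩) hε.le hc.1)
    (fun c hc hPc => let ⟨_, hL⟩ := hlim c hc
      exists_darbouxSumsWithin_of_tendsto_nhdsGT (fun t ht => hf t ⟨hc.1.trans ht.1, ht.2⟩)
        hε hc.2 hL hPc)

theorem lowerDarboux_eq_upperDarboux_of_tendsto_nhdsGT (hab : a ≤ b)
    (hf : ∀ t ∈ Icc a b, m ≤ f t ∧ f t ≤ M)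
    (hlim : ∀ x ∈ Ico a b, ∃ L, Tendsto f (𝓝[>] x) (𝓝 L)) :
    lowerDarboux f a b = upperDarboux f a b := by
  refine lowerDarboux_eq_upperDarboux_of_forall_darbouxSumsWithin fun r hr => ?_
  have hba : 0 < b - a + 1 := by linarith
  have hε : 0 < r / (2 * (b - a + 1)) := by positivity
  refine (forall_darbouxSumsWithin_of_tendsto_nhdsGT hab hf hlim hε (r / 2) (half_pos hr)).mono ?_
  calc r / (2 * (b - a + 1)) * (b - a) + r / 2
      ≤ r / (2 * (b - a + 1)) * (b - a + 1) + r / 2 := by gcongr; linarith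
    _ = r := by field_simp; ring

theorem lowerDarboux_eq_upperDarboux_of_tendsto_nhdsLT (hab : a ≤ b)
    (hf : ∀ t ∈ Icc a b, m ≤ f t ∧ f t ≤ M)
    (hlim : ∀ x ∈ Ioc a b, ∃ L, Tendsto f (𝓝[<] x) (𝓝 L)) :
    lowerDarboux f a b = upperDarboux f a b := by
  rw [← lowerDarboux_comp_neg, ← upperDarboux_comp_neg]
  refine lowerDarboux_eq_upperDarboux_of_tendsto_nhdsGT (neg_le_neg hab)
    (fun t ht => hf (-t) ⟨le_neg.1 ht.2, neg_le.1 ht.1⟩) fun x hx => ?_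
  obtain ⟨L, hL⟩ := hlim (-x) ⟨lt_neg.1 hx.2, neg_le.1 hx.1⟩
  exact ⟨L, hL.comp (by simpa using tendsto_neg_nhdsGT_neg (a := -x))⟩

end OneSidedLimits

theorem stmt14 (J : Set ℝ) (hJ : J.OrdConnected) (f : ℝ → ℝ)
    (hbd : BoundedOnCompacts J f)
    (hlim : (∀ x ∈ J, (∃ y ∈ J, x < y) → ∃ L : ℝ, Tendsto f (𝓝[>] x) (𝓝 L)) ∨
            (∀ x ∈ J, (∃ y ∈ J, y < x) → ∃ L : ℝ, Tendsto f (𝓝[<] x) (𝓝 L))) :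
    DarbouxIntegrableOnCompacts J f := by
  intro a ha b hb hab
  obtain ⟨m, M, hf⟩ := hbd a ha b hb
  have hsub : Icc a b ⊆ J := hJ.out ha hb
  rcases hlim with hlim | hlim
  · exact lowerDarboux_eq_upperDarboux_of_tendsto_nhdsGT hab.le hf fun x hx =>
      hlim x (hsub (Ico_subset_Icc_self hx)) ⟨b, hb, hx.2⟩
  · exact lowerDarboux_eq_upperDarboux_of_tendsto_nhdsLT hab.le hf fun x hx =>
      hlim x (hsub (Ioc_subset_Icc_self hx)) ⟨a, ha, hx.1⟩
end
end
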